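/- arXiv:1610.06094 — 2 statements merged into one kernel-verified Lean document; each statement's English description precedes it below -/
import Mathlib

section
/- Let G₁, G₂ be integer-weighted graphs on n vertices diagonalized by the same normalized Hadamard H, with G₂ regular of degree d₂, and let w₁ be odd and w₂ even. Then the merge graph with Laplacian L₃ = [[w₁L₁ + w₂d₂I, −w₂A₂],[−w₂A₂, w₁L₁ + w₂d₂I]] has PST from vertex p to vertex q (1 ≤ p < q ≤ n) at time π/2 if and only if G₁ has PST from p to q at time π/2. -/
/-!
Both `L₁` and the merge Laplacian `L₃` are diagonalised by scaled Hadamard matrices (`H` and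
`[[H, H], [H, -H]]`), so `exp (i π/2 L) = N⁻¹ K diag (i ^ λ) Kᵀ` depends on the integer eigenvalues
`λ` only modulo `4`. For `w₁` odd, `w₂` even and all `λ⁽¹⁾, λ⁽²⁾` even, both eigenvalue families
`w₁λ⁽¹⁾ ± w₂λ⁽²⁾ (+ 2w₂d₂)` of `L₃` are `≡ λ⁽¹⁾ (mod 4)`. Hence at time `π/2` the merge evolves as
two decoupled copies of `G₁`, i.e. `exp (i π/2 L₃) = diag (U₁, U₁)` with `U₁ = exp (i π/2 L₁)`.
-/

open Matrix

/-- Perfect state transfer at time π/2 for an integer Hamiltonian `L`. -/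
noncomputable def pstHalfPi {m : Type*} [Fintype m] [DecidableEq m]
    (L : Matrix m m ℤ) (j k : m) : Prop :=
  ‖(NormedSpace.exp ((Complex.I * ((Real.pi / 2 : ℝ) : ℂ)) •
        L.map (fun x => (x : ℂ)))) j k‖ = 1

theorem Int.odd_mul_modEq_four_of_even {w x : ℤ} (hw : Odd w) (hx : Even x) :
    w * x ≡ x [ZMOD 4] := by
  obtain ⟨k, rfl⟩ := hw
  obtain ⟨y, rfl⟩ := hx
  exact Int.modEq_iff_dvd.2 ⟨-k * y, by ring⟩

theorem Int.four_dvd_mul_of_even_of_even {w x : ℤ} (hw : Even w) (hx : Even x) : 4 ∣ w * x := by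
  obtain ⟨k, rfl⟩ := hw
  obtain ⟨y, rfl⟩ := hx
  exact ⟨k * y, by ring⟩

namespace Complex

theorem I_zpow_eq_of_modEq {a b : ℤ} (h : a ≡ b [ZMOD 4]) : I ^ a = I ^ b := by
  obtain ⟨c, hc⟩ := h.dvd
  have hI : I ^ (4 : ℤ) = 1 := by exact_mod_cast I_pow_four
  rw [show a = b + 4 * (-c) by linarith, zpow_add₀ I_ne_zero, _root_.zpow_mul, hI,
    _root_.one_zpow, mul_one]

theorem exp_I_pi_div_two_mul_intCast (k : ℤ) :
    exp (I * ((Real.pi / 2 : ℝ) : ℂ) * k) = I ^ k := by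
  rw [mul_comm, exp_int_mul, mul_comm, exp_mul_I, ← ofReal_cos, ← ofReal_sin,
    Real.cos_pi_div_two, Real.sin_pi_div_two]
  simp

end Complex

namespace Matrix

open Complex

def sylvester {m R : Type*} [Neg R] (H : Matrix m m R) : Matrix (m ⊕ m) (m ⊕ m) R :=
  fromBlocks H H H (-H)

theorem sylvester_map {m R S : Type*} [Neg R] [Neg S] (H : Matrix m m R) {f : R → S}
    (hf : ∀ a, f (-a) = -f a) : (sylvester H).map f = sylvester (H.map f) := by
  rw [sylvester, sylvester, fromBlocks_map, Matrix.map_neg _ hf]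

section Sylvester

variable {m R : Type*} [Fintype m] [DecidableEq m] [CommRing R]

theorem sylvester_mul_transpose {H : Matrix m m R} {N : R} (hH : H * Hᵀ = N • 1) :
    sylvester H * (sylvester H)ᵀ = (2 * N) • 1 := by
  rw [sylvester, fromBlocks_transpose, fromBlocks_multiply, ← fromBlocks_one, fromBlocks_smul]
  simp only [transpose_neg, mul_neg, neg_mul, neg_neg, hH, smul_zero]
  congr 1 <;> module

theorem sylvester_mul_diagonal_mul_transpose (H : Matrix m m R) (a b : m → R) :
    sylvester H * diagonal (Sum.elim a b) * (sylvester H)ᵀ =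
      fromBlocks (H * diagonal a * Hᵀ + H * diagonal b * Hᵀ)
        (H * diagonal a * Hᵀ - H * diagonal b * Hᵀ)
        (H * diagonal a * Hᵀ - H * diagonal b * Hᵀ)
        (H * diagonal a * Hᵀ + H * diagonal b * Hᵀ) := by
  rw [sylvester, ← fromBlocks_diagonal, fromBlocks_transpose, fromBlocks_multiply,
    fromBlocks_multiply]
  simp only [transpose_neg, mul_neg, neg_mul, neg_neg, mul_zero, add_zero, zero_add,
    sub_eq_add_neg]

theorem merge_smul_eq_sylvester_mul_diagonal_mul_transpose {H L₁ A₂ : Matrix m m R}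
    {N d₂ : R} {Λ₁ Λ₂ : m → R} (w₁ w₂ : R)
    (hH : H * Hᵀ = N • 1) (hL₁ : N • L₁ = H * diagonal Λ₁ * Hᵀ)
    (hL₂ : N • (d₂ • 1 - A₂) = H * diagonal Λ₂ * Hᵀ) :
    (2 * N) • fromBlocks (w₁ • L₁ + (w₂ * d₂) • 1) (-(w₂ • A₂))
        (-(w₂ • A₂)) (w₁ • L₁ + (w₂ * d₂) • 1) =
      sylvester H *
        diagonal (Sum.elim (fun ℓ => w₁ * Λ₁ ℓ + w₂ * Λ₂ ℓ)
          (fun ℓ => w₁ * Λ₁ ℓ - w₂ * Λ₂ ℓ + 2 * w₂ * d₂)) *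
        (sylvester H)ᵀ := by
  have hdiag_a : diagonal (fun ℓ => w₁ * Λ₁ ℓ + w₂ * Λ₂ ℓ) =
      w₁ • diagonal Λ₁ + w₂ • diagonal Λ₂ := by
    ext i j
    by_cases h : i = j <;> simp [h]
  have hdiag_b : diagonal (fun ℓ => w₁ * Λ₁ ℓ - w₂ * Λ₂ ℓ + 2 * w₂ * d₂) =
      w₁ • diagonal Λ₁ - w₂ • diagonal Λ₂ + (2 * w₂ * d₂) • 1 := by
    ext i j
    by_cases h : i = j <;> simp [h]
  have ha : H * diagonal (fun ℓ => w₁ * Λ₁ ℓ + w₂ * Λ₂ ℓ) * Hᵀ =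
      N • (w₁ • L₁ + w₂ • (d₂ • 1 - A₂)) := by
    simp only [hdiag_a, Matrix.mul_add, Matrix.add_mul, Matrix.mul_smul, Matrix.smul_mul, ← hL₁,
      ← hL₂]
    module
  have hb : H * diagonal (fun ℓ => w₁ * Λ₁ ℓ - w₂ * Λ₂ ℓ + 2 * w₂ * d₂) * Hᵀ =
      N • (w₁ • L₁ - w₂ • (d₂ • 1 - A₂) + (2 * w₂ * d₂) • 1) := by
    simp only [hdiag_b, Matrix.mul_add, Matrix.add_mul, Matrix.mul_sub, Matrix.sub_mul,
      Matrix.mul_smul, Matrix.smul_mul, Matrix.mul_one, hH, ← hL₁, ← hL₂]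
    module
  rw [sylvester_mul_diagonal_mul_transpose, ha, hb, fromBlocks_smul]
  congr 1 <;> module

end Sylvester

theorem exp_smul_eq_of_smul_eq_conj_diagonal {𝕂 m : Type*} [RCLike 𝕂] [Fintype m]
    [DecidableEq m] {K L : Matrix m m 𝕂} {d : m → 𝕂} {N : 𝕂} (hN : N ≠ 0)
    (hK : K * Kᵀ = N • 1) (hL : N • L = K * diagonal d * Kᵀ) (t : 𝕂) :
    NormedSpace.exp (t • L) =
      N⁻¹ • (K * diagonal (fun i => NormedSpace.exp (t * d i)) * Kᵀ) := by
  have hinv : K * (N⁻¹ • Kᵀ) = 1 := by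
    rw [Matrix.mul_smul, hK, smul_smul, inv_mul_cancel₀ hN, one_smul]
  have hunit : IsUnit K := (isUnit_iff_isUnit_det K).2 (isUnit_det_of_right_inverse hinv)
  have hL' : L = K * diagonal d * (N⁻¹ • Kᵀ) := by
    rw [Matrix.mul_smul, ← hL, smul_smul, inv_mul_cancel₀ hN, one_smul]
  have hconj : t • L = K * diagonal (t • d) * K⁻¹ := by
    rw [hL', inv_eq_right_inv hinv, diagonal_smul]
    simp only [Matrix.mul_smul, Matrix.smul_mul, smul_smul, mul_comm t]
  rw [hconj, exp_conj _ _ hunit, exp_diagonal, inv_eq_right_inv hinv, Matrix.mul_smul]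
  congr
  funext i
  simp

theorem exp_I_pi_div_two_smul_map_intCast {m : Type*} [Fintype m] [DecidableEq m]
    {K L : Matrix m m ℤ} {Λ : m → ℤ} {N : ℤ} (hN : N ≠ 0) (hK : K * Kᵀ = N • 1)
    (hL : N • L = K * diagonal Λ * Kᵀ) :
    NormedSpace.exp ((I * ((Real.pi / 2 : ℝ) : ℂ)) • L.map (fun x => (x : ℂ))) =
      (N : ℂ)⁻¹ • (K.map (↑) * diagonal (fun i => I ^ Λ i) * (K.map (↑))ᵀ) := by
  have hKc : K.map (↑) * (K.map (↑))ᵀ = (N : ℂ) • (1 : Matrix m m ℂ) := by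
    have := congrArg (Int.castRingHom ℂ).mapMatrix hK
    rwa [map_mul, map_zsmul, map_one, ← Int.cast_smul_eq_zsmul ℂ] at this
  have hLc : (N : ℂ) • L.map (↑) =
      K.map (↑) * diagonal (fun i => (Λ i : ℂ)) * (K.map (↑))ᵀ := by
    have := congrArg (Int.castRingHom ℂ).mapMatrix hL
    rwa [map_mul, map_mul, map_zsmul, ← Int.cast_smul_eq_zsmul ℂ,
      RingHom.mapMatrix_apply (M := diagonal Λ), diagonal_map (map_zero _)] at this
  rw [exp_smul_eq_of_smul_eq_conj_diagonal (by exact_mod_cast hN) hKc hLc]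
  simp_rw [← Complex.exp_eq_exp_ℂ, exp_I_pi_div_two_mul_intCast]

theorem exp_I_pi_div_two_smul_merge {m : Type*} [Fintype m] [DecidableEq m]
    {H L₁ A₂ : Matrix m m ℤ} {N d₂ w₁ w₂ : ℤ} {Λ₁ Λ₂ : m → ℤ} (hN : N ≠ 0)
    (hH : H * Hᵀ = N • 1) (hL₁ : N • L₁ = H * diagonal Λ₁ * Hᵀ)
    (hL₂ : N • (d₂ • 1 - A₂) = H * diagonal Λ₂ * Hᵀ)
    (heven₁ : ∀ ℓ, Even (Λ₁ ℓ)) (heven₂ : ∀ ℓ, Even (Λ₂ ℓ)) (hw₁ : Odd w₁) (hw₂ : Even w₂) :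
    NormedSpace.exp ((I * ((Real.pi / 2 : ℝ) : ℂ)) •
        (fromBlocks (w₁ • L₁ + (w₂ * d₂) • 1) (-(w₂ • A₂))
          (-(w₂ • A₂)) (w₁ • L₁ + (w₂ * d₂) • 1)).map (fun x => (x : ℂ))) =
      fromBlocks (NormedSpace.exp ((I * ((Real.pi / 2 : ℝ) : ℂ)) • L₁.map (fun x => (x : ℂ)))) 0 0
        (NormedSpace.exp ((I * ((Real.pi / 2 : ℝ) : ℂ)) • L₁.map (fun x => (x : ℂ)))) := by
  have hphase : (fun i => I ^ Sum.elim (fun ℓ => w₁ * Λ₁ ℓ + w₂ * Λ₂ ℓ)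
      (fun ℓ => w₁ * Λ₁ ℓ - w₂ * Λ₂ ℓ + 2 * w₂ * d₂) i) =
      Sum.elim (fun ℓ => I ^ Λ₁ ℓ) (fun ℓ => I ^ Λ₁ ℓ) := by
    have h₁ (ℓ : m) : w₁ * Λ₁ ℓ ≡ Λ₁ ℓ [ZMOD 4] :=
      Int.odd_mul_modEq_four_of_even hw₁ (heven₁ ℓ)
    have h₂ (ℓ : m) : w₂ * Λ₂ ℓ ≡ 0 [ZMOD 4] :=
      Int.modEq_zero_iff_dvd.2 (Int.four_dvd_mul_of_even_of_even hw₂ (heven₂ ℓ))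
    have h₃ : 2 * w₂ * d₂ ≡ 0 [ZMOD 4] := by
      rw [Int.modEq_zero_iff_dvd, mul_comm 2, mul_assoc]
      exact Int.four_dvd_mul_of_even_of_even hw₂ (even_two_mul d₂)
    funext i
    rcases i with ℓ | ℓ
    · exact I_zpow_eq_of_modEq (by simpa using (h₁ ℓ).add (h₂ ℓ))
    · exact I_zpow_eq_of_modEq (by simpa using ((h₁ ℓ).sub (h₂ ℓ)).add h₃)
  rw [exp_I_pi_div_two_smul_map_intCast (mul_ne_zero two_ne_zero hN)
      (sylvester_mul_transpose hH)
      (merge_smul_eq_sylvester_mul_diagonal_mul_transpose w₁ w₂ hH hL₁ hL₂),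
    exp_I_pi_div_two_smul_map_intCast hN hH hL₁, hphase, sylvester_map H Int.cast_neg,
    sylvester_mul_diagonal_mul_transpose, sub_self, fromBlocks_smul, smul_zero, ← two_smul ℂ,
    smul_smul]
  push_cast
  congr 2 <;> field_simp

end Matrix

theorem merge_pst_w1_odd_w2_even_general (n : ℕ)
    (H : Matrix (Fin n) (Fin n) ℤ)
    (hH : H * Hᵀ = (n : ℤ) • 1)
    (L₁ A₂ : Matrix (Fin n) (Fin n) ℤ) (d₂ w₁ w₂ : ℤ)
    (Λ₁ Λ₂ : Fin n → ℤ)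
    (hL₁ : (n : ℤ) • L₁ = H * Matrix.diagonal Λ₁ * Hᵀ)
    (hL₂ : (n : ℤ) • (d₂ • (1 : Matrix (Fin n) (Fin n) ℤ) - A₂) =
      H * Matrix.diagonal Λ₂ * Hᵀ)
    (heven₁ : ∀ ℓ, Even (Λ₁ ℓ)) (heven₂ : ∀ ℓ, Even (Λ₂ ℓ))
    (hw₁ : Odd w₁) (hw₂ : Even w₂)
    (L₃ : Matrix (Fin n ⊕ Fin n) (Fin n ⊕ Fin n) ℤ)
    (hL₃ : L₃ = Matrix.fromBlocks
      (w₁ • L₁ + (w₂ * d₂) • (1 : Matrix (Fin n) (Fin n) ℤ)) (-(w₂ • A₂))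
      (-(w₂ • A₂)) (w₁ • L₁ + (w₂ * d₂) • (1 : Matrix (Fin n) (Fin n) ℤ)))
    (p q : Fin n) :
    pstHalfPi L₃ (Sum.inl p) (Sum.inl q) ↔ pstHalfPi L₁ p q := by
  have hn : (n : ℤ) ≠ 0 := by exact_mod_cast p.pos.ne'
  rw [pstHalfPi, pstHalfPi, hL₃,
    exp_I_pi_div_two_smul_merge hn hH hL₁ hL₂ heven₁ heven₂ hw₁ hw₂, fromBlocks_apply₁₁]

theorem merge_pst_w1_odd_w2_even (n : ℕ) [NeZero n]
    (H : Matrix (Fin n) (Fin n) ℤ)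
    (hent : ∀ u v, H u v = 1 ∨ H u v = -1)
    (hH : H * Hᵀ = (n : ℤ) • 1)
    (hrow : ∀ v, H 0 v = 1) (hcol : ∀ u, H u 0 = 1)
    (L₁ A₂ : Matrix (Fin n) (Fin n) ℤ) (d₂ w₁ w₂ : ℤ)
    (Λ₁ Λ₂ : Fin n → ℤ)
    (hL₁ : (n : ℤ) • L₁ = H * Matrix.diagonal Λ₁ * Hᵀ)
    (hL₂ : (n : ℤ) • (d₂ • (1 : Matrix (Fin n) (Fin n) ℤ) - A₂) =
      H * Matrix.diagonal Λ₂ * Hᵀ)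
    (heven₁ : ∀ ℓ, Even (Λ₁ ℓ)) (heven₂ : ∀ ℓ, Even (Λ₂ ℓ))
    (hw₁ : Odd w₁) (hw₂ : Even w₂)
    (L₃ : Matrix (Fin n ⊕ Fin n) (Fin n ⊕ Fin n) ℤ)
    (hL₃ : L₃ = Matrix.fromBlocks
      (w₁ • L₁ + (w₂ * d₂) • (1 : Matrix (Fin n) (Fin n) ℤ)) (-(w₂ • A₂))
      (-(w₂ • A₂)) (w₁ • L₁ + (w₂ * d₂) • (1 : Matrix (Fin n) (Fin n) ℤ)))
    (p q : Fin n) (hpq : p < q) :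
    pstHalfPi L₃ (Sum.inl p) (Sum.inl q) ↔ pstHalfPi L₁ p q :=
  merge_pst_w1_odd_w2_even_general n H hH L₁ A₂ d₂ w₁ w₂ Λ₁ Λ₂ hL₁ hL₂ heven₁ heven₂ hw₁ hw₂ L₃ hL₃
    p q
end

section
/- Let G₁, G₂ be integer-weighted graphs on n vertices diagonalized by the same normalized Hadamard H, with G₂ regular of degree d₂ odd, and suppose w₁, w₂ are both odd integers. Then the merge graph with Laplacian L₃ = [[w₁L₁ + w₂d₂I, −w₂A₂],[−w₂A₂, w₁L₁ + w₂d₂I]] has PST from vertex p ∈ {1,…,n} to vertex q+n (q ∈ {1,…,n}) at time π/2 if and only if the graph with Laplacian L₁ + L₂ has PST from p to q at time π/2. -/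
/-! The merge Laplacian `L₃ = [[X, Y], [Y, X]]` is diagonalized by `[[H, H], [H, -H]]`, with the
eigenvalues `f` of `X + Y = w₁L₁ + w₂L₂` and `g` of `X - Y = w₁L₁ - w₂L₂ + 2w₂d₂`. In this
eigenbasis the `(p, q + n)` entry of `exp(iπ/2 · L₃)` is
`(2n)⁻¹ ∑ₗ H p ℓ H q ℓ (exp(iπ/2 · f ℓ) - exp(iπ/2 · g ℓ))`. As the eigenvalues of `L₁`, `L₂`
are even and `w₁`, `w₂`, `d₂` odd, `f ≡ Λ₁ + Λ₂` and `g ≡ Λ₁ + Λ₂ + 2 (mod 4)`, so the two phases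
are `± exp(iπ/2 · (Λ₁ + Λ₂))` and the entry is the `(p, q)` entry of `exp(iπ/2 · (L₁ + L₂))`. -/

open Matrix

open NormedSpace

variable {m : Type*} [Fintype m] [DecidableEq m]

/-- When `K * Kᵀ = N • 1` with `N` invertible, this says `M = K * diagonal Λ * K⁻¹`:
the columns of `K` are eigenvectors of `M` with eigenvalues `Λ`. -/
def IsDiagonalizedBy {R : Type*} [CommRing R] (K : Matrix m m R) (N : R) (M : Matrix m m R)
    (Λ : m → R) : Prop :=
  N • M = K * diagonal Λ * Kᵀ

namespace IsDiagonalizedBy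

section CommRing

variable {R : Type*} [CommRing R] {K P Q X Y : Matrix m m R} {N : R} {p q f g : m → R}

theorem one (hK : K * Kᵀ = N • 1) : IsDiagonalizedBy K N 1 1 := by
  rw [IsDiagonalizedBy, diagonal_one', Matrix.mul_one, hK]

theorem add (hP : IsDiagonalizedBy K N P p) (hQ : IsDiagonalizedBy K N Q q) :
    IsDiagonalizedBy K N (P + Q) (p + q) := by
  rw [IsDiagonalizedBy, smul_add, hP, hQ, ← Matrix.add_mul, ← Matrix.mul_add, diagonal_add]
  rfl

theorem sub (hP : IsDiagonalizedBy K N P p) (hQ : IsDiagonalizedBy K N Q q) :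
    IsDiagonalizedBy K N (P - Q) (p - q) := by
  rw [IsDiagonalizedBy, smul_sub, hP, hQ, ← Matrix.sub_mul, ← Matrix.mul_sub, diagonal_sub]
  rfl

theorem smul (hP : IsDiagonalizedBy K N P p) (a : R) : IsDiagonalizedBy K N (a • P) (a • p) := by
  rw [IsDiagonalizedBy, smul_comm, hP, diagonal_smul, Matrix.mul_smul, Matrix.smul_mul]

theorem fromBlocks (hf : IsDiagonalizedBy K N (X + Y) f) (hg : IsDiagonalizedBy K N (X - Y) g) :
    IsDiagonalizedBy (fromBlocks K K K (-K)) (2 * N) (fromBlocks X Y Y X) (Sum.elim f g) := by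
  rw [IsDiagonalizedBy] at hf hg ⊢
  rw [← fromBlocks_diagonal, fromBlocks_transpose, fromBlocks_multiply,
    fromBlocks_multiply, fromBlocks_smul]
  simp only [Matrix.mul_zero, add_zero, zero_add, zero_sub, transpose_neg, Matrix.mul_neg,
    Matrix.neg_mul, neg_neg, ← hf, ← hg, ← sub_eq_add_neg]
  congr 1 <;> module

end CommRing

theorem map_intCast {R : Type*} [CommRing R] {K M : Matrix m m ℤ} {N : ℤ} {Λ : m → ℤ}
    (h : IsDiagonalizedBy K N M Λ) :
    IsDiagonalizedBy (K.map (fun x => (x : R))) N (M.map (fun x => (x : R)))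
      (fun ℓ => (Λ ℓ : R)) := by
  have := congrArg (Int.castRingHom R).mapMatrix h
  rw [map_mul, map_mul, map_zsmul, ← Int.cast_smul_eq_zsmul R] at this
  rw [IsDiagonalizedBy]
  simpa only [RingHom.mapMatrix_apply, Int.coe_castRingHom, ← transpose_map,
    diagonal_map Int.cast_zero] using this

theorem exp_smul_apply {N : ℂ} (hN : N ≠ 0) {K M : Matrix m m ℂ} {Λ : m → ℂ}
    (hK : K * Kᵀ = N • 1) (hM : IsDiagonalizedBy K N M Λ) (c : ℂ) (i j : m) :
    exp (c • M) i j = N⁻¹ * ∑ ℓ, K i ℓ * K j ℓ * Complex.exp (c * Λ ℓ) := by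
  have hKinv : K * (N⁻¹ • Kᵀ) = 1 := by
    rw [Matrix.mul_smul, hK, smul_smul, inv_mul_cancel₀ hN, one_smul]
  let U : (Matrix m m ℂ)ˣ := ⟨K, N⁻¹ • Kᵀ, hKinv, mul_eq_one_comm.mp hKinv⟩
  have hcM : c • M = U * diagonal (c • Λ) * (U⁻¹ : (Matrix m m ℂ)ˣ) := by
    change c • M = K * diagonal (c • Λ) * (N⁻¹ • Kᵀ)
    rw [diagonal_smul, Matrix.mul_smul, Matrix.mul_smul, Matrix.smul_mul, ← hM, smul_smul,
      smul_smul, mul_right_comm, inv_mul_cancel₀ hN, one_mul]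
  rw [hcM, Matrix.exp_units_conj, Matrix.exp_diagonal]
  change (K * diagonal (exp (c • Λ)) * (N⁻¹ • Kᵀ)) i j = _
  rw [Matrix.mul_apply, Finset.mul_sum]
  refine Finset.sum_congr rfl fun ℓ _ => ?_
  simp only [mul_diagonal, Matrix.smul_apply, transpose_apply, smul_eq_mul, Pi.coe_exp,
    Pi.smul_apply, ← Complex.exp_eq_exp_ℂ]
  ring

end IsDiagonalizedBy

theorem fromBlocks_neg_mul_transpose {R : Type*} [CommRing R] {K : Matrix m m R} {N : R}
    (hK : K * Kᵀ = N • 1) :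
    fromBlocks K K K (-K) * (fromBlocks K K K (-K))ᵀ = (2 * N) • 1 := by
  have h₁ : IsDiagonalizedBy K N (1 + 0) 1 := by simpa using IsDiagonalizedBy.one hK
  have h₂ : IsDiagonalizedBy K N (1 - 0) 1 := by simpa using IsDiagonalizedBy.one hK
  have := h₁.fromBlocks h₂
  rw [IsDiagonalizedBy, fromBlocks_one, Sum.elim_one_one, diagonal_one', Matrix.mul_one] at this
  exact this.symm

theorem exp_smul_fromBlocks_apply_inl_inr {N : ℂ} (hN : N ≠ 0) {K X Y S : Matrix m m ℂ}
    {f g s : m → ℂ} (hK : K * Kᵀ = N • 1) (hf : IsDiagonalizedBy K N (X + Y) f)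
    (hg : IsDiagonalizedBy K N (X - Y) g) (hS : IsDiagonalizedBy K N S s) {c : ℂ}
    (hfs : ∀ ℓ, Complex.exp (c * f ℓ) = Complex.exp (c * s ℓ))
    (hgs : ∀ ℓ, Complex.exp (c * g ℓ) = -Complex.exp (c * s ℓ)) (i j : m) :
    exp (c • fromBlocks X Y Y X) (.inl i) (.inr j) = exp (c • S) i j := by
  rw [(hf.fromBlocks hg).exp_smul_apply (mul_ne_zero two_ne_zero hN)
      (fromBlocks_neg_mul_transpose hK), hS.exp_smul_apply hN hK, Fintype.sum_sum_type]
  simp only [fromBlocks_apply₁₁, fromBlocks_apply₁₂, fromBlocks_apply₂₁, fromBlocks_apply₂₂,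
    Sum.elim_inl, Sum.elim_inr, Matrix.neg_apply, hfs, hgs, ← Finset.sum_add_distrib]
  rw [Finset.mul_sum, Finset.mul_sum]
  exact Finset.sum_congr rfl fun ℓ _ => by ring

theorem cexp_halfPi_mul_intCast_eq_of_four_dvd {x y : ℤ} (h : 4 ∣ x - y) :
    Complex.exp (Complex.I * ((Real.pi / 2 : ℝ) : ℂ) * x) =
      Complex.exp (Complex.I * ((Real.pi / 2 : ℝ) : ℂ) * y) := by
  obtain ⟨k, hk⟩ := h
  rw [show x = y + 4 * k by omega]
  push_cast
  rw [show Complex.I * (Real.pi / 2) * (y + 4 * k) =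
      Complex.I * (Real.pi / 2) * y + k * (2 * Real.pi * Complex.I) by ring,
    Complex.exp_add, Complex.exp_int_mul_two_pi_mul_I, mul_one]

theorem cexp_halfPi_mul_intCast_eq_neg_of_four_dvd {x y : ℤ} (h : 4 ∣ x - y - 2) :
    Complex.exp (Complex.I * ((Real.pi / 2 : ℝ) : ℂ) * x) =
      -Complex.exp (Complex.I * ((Real.pi / 2 : ℝ) : ℂ) * y) := by
  obtain ⟨k, hk⟩ := h
  rw [show x = y + 4 * k + 2 by omega]
  push_cast
  rw [show Complex.I * (Real.pi / 2) * (y + 4 * k + 2) =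
      Complex.I * (Real.pi / 2) * y + k * (2 * Real.pi * Complex.I) + Real.pi * Complex.I by ring,
    Complex.exp_add, Complex.exp_add, Complex.exp_int_mul_two_pi_mul_I, Complex.exp_pi_mul_I]
  ring

theorem exp_halfPi_smul_fromBlocks_apply_inl_inr {N : ℤ} (hN : N ≠ 0) {K X Y S : Matrix m m ℤ}
    {f g s : m → ℤ} (hK : K * Kᵀ = N • 1) (hf : IsDiagonalizedBy K N (X + Y) f)
    (hg : IsDiagonalizedBy K N (X - Y) g) (hS : IsDiagonalizedBy K N S s)
    (hfs : ∀ ℓ, 4 ∣ f ℓ - s ℓ) (hgs : ∀ ℓ, 4 ∣ g ℓ - s ℓ - 2) (i j : m) :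
    exp ((Complex.I * ((Real.pi / 2 : ℝ) : ℂ)) • (fromBlocks X Y Y X).map (fun x => (x : ℂ)))
        (.inl i) (.inr j) =
      exp ((Complex.I * ((Real.pi / 2 : ℝ) : ℂ)) • S.map (fun x => (x : ℂ))) i j := by
  have hKc : K.map (fun x => (x : ℂ)) * (K.map (fun x => (x : ℂ)))ᵀ = (N : ℂ) • 1 := by
    simpa [IsDiagonalizedBy, eq_comm] using (IsDiagonalizedBy.one hK).map_intCast (R := ℂ)
  have hfc := hf.map_intCast (R := ℂ)
  have hgc := hg.map_intCast (R := ℂ)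
  rw [Matrix.map_add _ Int.cast_add] at hfc
  rw [Matrix.map_sub _ Int.cast_sub] at hgc
  rw [fromBlocks_map]
  exact exp_smul_fromBlocks_apply_inl_inr (Int.cast_ne_zero.mpr hN) hKc hfc hgc hS.map_intCast
    (fun ℓ => cexp_halfPi_mul_intCast_eq_of_four_dvd (hfs ℓ))
    (fun ℓ => cexp_halfPi_mul_intCast_eq_neg_of_four_dvd (hgs ℓ)) i j

theorem four_dvd_mul_add_mul_sub_add {w₁ w₂ a b : ℤ} (hw₁ : Odd w₁) (hw₂ : Odd w₂)
    (ha : Even a) (hb : Even b) : 4 ∣ w₁ * a + w₂ * b - (a + b) := by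
  obtain ⟨u, rfl⟩ := hw₁; obtain ⟨v, rfl⟩ := hw₂; obtain ⟨a, rfl⟩ := ha; obtain ⟨b, rfl⟩ := hb
  exact ⟨u * a + v * b, by ring⟩

theorem four_dvd_mul_sub_mul_add_sub_add_sub_two {w₁ w₂ d a b : ℤ} (hw₁ : Odd w₁)
    (hw₂ : Odd w₂) (hd : Odd d) (ha : Even a) (hb : Even b) :
    4 ∣ w₁ * a - w₂ * b + 2 * w₂ * d - (a + b) - 2 := by
  obtain ⟨u, rfl⟩ := hw₁; obtain ⟨v, rfl⟩ := hw₂; obtain ⟨e, rfl⟩ := hd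
  obtain ⟨a, rfl⟩ := ha; obtain ⟨b, rfl⟩ := hb
  exact ⟨u * a - v * b - b + 2 * v * e + v + e, by ring⟩

theorem merge_pst_all_odd_cross_general (n : ℕ) [NeZero n]
    (H : Matrix (Fin n) (Fin n) ℤ)
    (hH : H * Hᵀ = (n : ℤ) • 1)
    (L₁ A₂ : Matrix (Fin n) (Fin n) ℤ) (d₂ w₁ w₂ : ℤ)
    (Λ₁ Λ₂ : Fin n → ℤ)
    (hL₁ : (n : ℤ) • L₁ = H * Matrix.diagonal Λ₁ * Hᵀ)
    (hL₂ : (n : ℤ) • (d₂ • (1 : Matrix (Fin n) (Fin n) ℤ) - A₂) =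
      H * Matrix.diagonal Λ₂ * Hᵀ)
    (heven₁ : ∀ ℓ, Even (Λ₁ ℓ)) (heven₂ : ∀ ℓ, Even (Λ₂ ℓ))
    (hw₁ : Odd w₁) (hw₂ : Odd w₂) (hd₂ : Odd d₂)
    (L₃ : Matrix (Fin n ⊕ Fin n) (Fin n ⊕ Fin n) ℤ)
    (hL₃ : L₃ = Matrix.fromBlocks
      (w₁ • L₁ + (w₂ * d₂) • (1 : Matrix (Fin n) (Fin n) ℤ)) (-(w₂ • A₂))
      (-(w₂ • A₂)) (w₁ • L₁ + (w₂ * d₂) • (1 : Matrix (Fin n) (Fin n) ℤ)))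
    (p q : Fin n) :
    pstHalfPi L₃ (Sum.inl p) (Sum.inr q) ↔
      pstHalfPi (L₁ + (d₂ • (1 : Matrix (Fin n) (Fin n) ℤ) - A₂)) p q := by
  have h₁ : IsDiagonalizedBy H n L₁ Λ₁ := hL₁
  have h₂ : IsDiagonalizedBy H n (d₂ • 1 - A₂) Λ₂ := hL₂
  have hsum : IsDiagonalizedBy H n
      (w₁ • L₁ + (w₂ * d₂) • 1 + -(w₂ • A₂)) (w₁ • Λ₁ + w₂ • Λ₂) := by
    convert (h₁.smul w₁).add (h₂.smul w₂) using 1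
    module
  have hdiff : IsDiagonalizedBy H n
      (w₁ • L₁ + (w₂ * d₂) • 1 - -(w₂ • A₂)) (w₁ • Λ₁ - w₂ • Λ₂ + (2 * w₂ * d₂) • 1) := by
    convert ((h₁.smul w₁).sub (h₂.smul w₂)).add ((IsDiagonalizedBy.one hH).smul (2 * w₂ * d₂))
      using 1
    module
  unfold pstHalfPi
  rw [hL₃, exp_halfPi_smul_fromBlocks_apply_inl_inr (by exact_mod_cast NeZero.ne n) hH hsum hdiff
    (h₁.add h₂)
    (fun ℓ => by simpa using four_dvd_mul_add_mul_sub_add hw₁ hw₂ (heven₁ ℓ) (heven₂ ℓ))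
    (fun ℓ => by
      simpa [sub_eq_add_neg] using
        four_dvd_mul_sub_mul_add_sub_add_sub_two hw₁ hw₂ hd₂ (heven₁ ℓ) (heven₂ ℓ))]

theorem merge_pst_all_odd_cross (n : ℕ) [NeZero n]
    (H : Matrix (Fin n) (Fin n) ℤ)
    (hent : ∀ u v, H u v = 1 ∨ H u v = -1)
    (hH : H * Hᵀ = (n : ℤ) • 1)
    (hrow : ∀ v, H 0 v = 1) (hcol : ∀ u, H u 0 = 1)
    (L₁ A₂ : Matrix (Fin n) (Fin n) ℤ) (d₂ w₁ w₂ : ℤ)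
    (Λ₁ Λ₂ : Fin n → ℤ)
    (hL₁ : (n : ℤ) • L₁ = H * Matrix.diagonal Λ₁ * Hᵀ)
    (hL₂ : (n : ℤ) • (d₂ • (1 : Matrix (Fin n) (Fin n) ℤ) - A₂) =
      H * Matrix.diagonal Λ₂ * Hᵀ)
    (heven₁ : ∀ ℓ, Even (Λ₁ ℓ)) (heven₂ : ∀ ℓ, Even (Λ₂ ℓ))
    (hw₁ : Odd w₁) (hw₂ : Odd w₂) (hd₂ : Odd d₂)
    (L₃ : Matrix (Fin n ⊕ Fin n) (Fin n ⊕ Fin n) ℤ)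
    (hL₃ : L₃ = Matrix.fromBlocks
      (w₁ • L₁ + (w₂ * d₂) • (1 : Matrix (Fin n) (Fin n) ℤ)) (-(w₂ • A₂))
      (-(w₂ • A₂)) (w₁ • L₁ + (w₂ * d₂) • (1 : Matrix (Fin n) (Fin n) ℤ)))
    (p q : Fin n) :
    pstHalfPi L₃ (Sum.inl p) (Sum.inr q) ↔
      pstHalfPi (L₁ + (d₂ • (1 : Matrix (Fin n) (Fin n) ℤ) - A₂)) p q :=
  merge_pst_all_odd_cross_general n H hH L₁ A₂ d₂ w₁ w₂ Λ₁ Λ₂ hL₁ hL₂ heven₁ heven₂ hw₁ hw₂ hd₂ L₃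
    hL₃ p q
end
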